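/- With the notation of the previous statement, conversely: if ν solves the Fokker–Planck equation and μ_t := e^{φ_t} ν_t solves the controlled Fokker–Planck equation ∂_t μ_t = -∇·(b_t μ_t) - ∇·(D_t∇φ_t μ_t) + (1/2)∇·(D_t∇μ_t), then φ satisfies the HJB equation ∂_t φ_t = -b_t·∇φ_t - (1/2)∇φ_t·D_t∇φ_t - (1/2)∇·(D_t∇φ_t). -/

import Mathlib

open Matrix Real Set

/-- Partial derivative in coordinate direction `i`. -/
noncomputable def grad {d : ℕ} (f : (Fin d → ℝ) → ℝ) (x : Fin d → ℝ) : Fin d → ℝ :=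
  fun i => fderiv ℝ f x (Pi.single i 1)

/-- Divergence of a vector field on `ℝ^d`. -/
noncomputable def dvg {d : ℕ} (F : (Fin d → ℝ) → (Fin d → ℝ)) (x : Fin d → ℝ) : ℝ :=
  ∑ i, fderiv ℝ (fun y => F y i) x (Pi.single i 1)

section helpers
variable {d : ℕ}

lemma grad_mul {f g : (Fin d → ℝ) → ℝ} {x} (hf : DifferentiableAt ℝ f x)
    (hg : DifferentiableAt ℝ g x) :
    grad (fun y => f y * g y) x = f x • grad g x + g x • grad f x := by
  funext i
  simp [grad, fderiv_fun_mul hf hg]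

lemma grad_exp {f : (Fin d → ℝ) → ℝ} {x} (hf : DifferentiableAt ℝ f x) :
    grad (fun y => Real.exp (f y)) x = Real.exp (f x) • grad f x := by
  funext i
  simp [grad, fderiv_exp hf]

lemma dvg_smul {c : (Fin d → ℝ) → ℝ} {F : (Fin d → ℝ) → Fin d → ℝ} {x}
    (hc : DifferentiableAt ℝ c x) (hF : ∀ i, DifferentiableAt ℝ (fun y => F y i) x) :
    dvg (fun y => c y • F y) x = grad c x ⬝ᵥ F x + c x * dvg F x := by
  simp only [dvg, dotProduct, grad, Pi.smul_apply, smul_eq_mul, Finset.mul_sum,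
    ← Finset.sum_add_distrib]
  refine Finset.sum_congr rfl fun i _ => ?_
  rw [fderiv_fun_mul hc (hF i)]
  simp [mul_comm]
  ring

lemma dvg_add {F G : (Fin d → ℝ) → Fin d → ℝ} {x}
    (hF : ∀ i, DifferentiableAt ℝ (fun y => F y i) x)
    (hG : ∀ i, DifferentiableAt ℝ (fun y => G y i) x) :
    dvg (fun y => F y + G y) x = dvg F x + dvg G x := by
  simp only [dvg, Pi.add_apply, ← Finset.sum_add_distrib]
  refine Finset.sum_congr rfl fun i _ => ?_
  rw [fderiv_fun_add (hF i) (hG i)]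
  simp

lemma symm_dot {M : Matrix (Fin d) (Fin d) ℝ} (hM : M.IsSymm) (v w : Fin d → ℝ) :
    v ⬝ᵥ M *ᵥ w = w ⬝ᵥ M *ᵥ v := by
  rw [Matrix.dotProduct_mulVec, ← Matrix.mulVec_transpose, hM.eq, dotProduct_comm]

lemma slice_smooth {E F : Type*} [NormedAddCommGroup E] [NormedSpace ℝ E]
    [NormedAddCommGroup F] [NormedSpace ℝ F]
    {f : ℝ × E → F} (hf : ContDiff ℝ (⊤ : ℕ∞) f) (t : ℝ) :
    ContDiff ℝ (⊤ : ℕ∞) (fun y : E => f (t, y)) :=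
  hf.comp (contDiff_const.prodMk contDiff_id)

lemma tslice_smooth {E F : Type*} [NormedAddCommGroup E] [NormedSpace ℝ E]
    [NormedAddCommGroup F] [NormedSpace ℝ F]
    {f : ℝ × E → F} (hf : ContDiff ℝ (⊤ : ℕ∞) f) (x : E) :
    ContDiff ℝ (⊤ : ℕ∞) (fun s : ℝ => f (s, x)) :=
  hf.comp (contDiff_id.prodMk contDiff_const)

lemma grad_smooth {f : (Fin d → ℝ) → ℝ} (hf : ContDiff ℝ (⊤ : ℕ∞) f) (i : Fin d) :
    ContDiff ℝ (⊤ : ℕ∞) (fun y => grad f y i) :=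
  (hf.fderiv_right (by simp)).clm_apply contDiff_const

lemma mulVec_comp_smooth {M : Matrix (Fin d) (Fin d) ℝ} {G : (Fin d → ℝ) → Fin d → ℝ}
    (hG : ∀ j, ContDiff ℝ (⊤ : ℕ∞) (fun y => G y j)) (i : Fin d) :
    ContDiff ℝ (⊤ : ℕ∞) (fun y => (M *ᵥ G y) i) := by
  simp only [Matrix.mulVec, dotProduct]
  exact ContDiff.sum fun j _ => (contDiff_const.mul (hG j))

end helpers

/-- Conversely: if `ν` solves the Fokker–Planck equation and `μ_t = e^{φ_t} ν_t` solves the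
controlled Fokker–Planck equation, then `φ` satisfies the HJB equation. -/
theorem controlled_FokkerPlanck_implies_HJB
    {d : ℕ} (T : ℝ) (hT : 0 < T)
    (ν φ : ℝ → (Fin d → ℝ) → ℝ)
    (b : ℝ → (Fin d → ℝ) → (Fin d → ℝ))
    (D : ℝ → Matrix (Fin d) (Fin d) ℝ)
    (hν_smooth : ContDiff ℝ (⊤ : ℕ∞) (fun p : ℝ × (Fin d → ℝ) => ν p.1 p.2))
    (hφ_smooth : ContDiff ℝ (⊤ : ℕ∞) (fun p : ℝ × (Fin d → ℝ) => φ p.1 p.2))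
    (hb_smooth : ContDiff ℝ (⊤ : ℕ∞) (fun p : ℝ × (Fin d → ℝ) => b p.1 p.2))
    (hν_pos : ∀ t x, 0 < ν t x)
    (hD_symm : ∀ t, (D t).IsSymm)
    -- Fokker–Planck equation for ν:
    (hFP : ∀ t ∈ Icc (0:ℝ) T, ∀ x, deriv (fun s => ν s x) t =
      - dvg (fun y => ν t y • b t y) x
        + (1/2) * dvg (fun y => (D t).mulVec (grad (ν t) y)) x)
    -- Controlled Fokker–Planck equation for μ_t = e^{φ_t} ν_t:
    (hCFP : ∀ t ∈ Icc (0:ℝ) T, ∀ x,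
      deriv (fun s => Real.exp (φ s x) * ν s x) t =
        - dvg (fun y => (Real.exp (φ t y) * ν t y) • b t y) x
          - dvg (fun y => (Real.exp (φ t y) * ν t y) • (D t).mulVec (grad (φ t) y)) x
          + (1/2) * dvg (fun y =>
              (D t).mulVec (grad (fun z => Real.exp (φ t z) * ν t z) y)) x) :
    -- HJB equation for φ:
    ∀ t ∈ Icc (0:ℝ) T, ∀ x, deriv (fun s => φ s x) t =
      - (b t x ⬝ᵥ grad (φ t) x)
        - (1/2) * (grad (φ t) x ⬝ᵥ (D t).mulVec (grad (φ t) x))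
        - (1/2) * dvg (fun y => (D t).mulVec (grad (φ t) y)) x := by
  intro t ht x
  -- smoothness of the time slices
  have hφt : ContDiff ℝ (⊤ : ℕ∞) (φ t) := slice_smooth hφ_smooth t
  have hνt : ContDiff ℝ (⊤ : ℕ∞) (ν t) := slice_smooth hν_smooth t
  have hbt : ContDiff ℝ (⊤ : ℕ∞) (b t) := slice_smooth hb_smooth t
  have hEt : ContDiff ℝ (⊤ : ℕ∞) (fun y => Real.exp (φ t y)) := hφt.exp
  have hμt : ContDiff ℝ (⊤ : ℕ∞) (fun y => Real.exp (φ t y) * ν t y) := hEt.mul hνt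
  have hbti : ∀ i, ContDiff ℝ (⊤ : ℕ∞) (fun y => b t y i) := fun i => contDiff_pi.mp hbt i
  have hgφ : ∀ i, ContDiff ℝ (⊤ : ℕ∞) (fun y => grad (φ t) y i) := grad_smooth hφt
  have hgν : ∀ i, ContDiff ℝ (⊤ : ℕ∞) (fun y => grad (ν t) y i) := grad_smooth hνt
  have hMφ : ∀ i, ContDiff ℝ (⊤ : ℕ∞) (fun y => ((D t) *ᵥ grad (φ t) y) i) := mulVec_comp_smooth hgφ
  have hMν : ∀ i, ContDiff ℝ (⊤ : ℕ∞) (fun y => ((D t) *ᵥ grad (ν t) y) i) := mulVec_comp_smooth hgν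
  -- gradient of the product e^{φ} ν
  have hgradμ : ∀ y, grad (fun z => Real.exp (φ t z) * ν t z) y
      = (Real.exp (φ t y) * ν t y) • grad (φ t) y + Real.exp (φ t y) • grad (ν t) y := by
    intro y
    rw [grad_mul (hEt.differentiable (by simp) y) (hνt.differentiable (by simp) y),
      grad_exp (hφt.differentiable (by simp) y)]
    funext i
    simp only [Pi.add_apply, Pi.smul_apply, smul_eq_mul]
    ring
  -- split the second-order divergence term
  have hC3 : dvg (fun y => (D t) *ᵥ grad (fun z => Real.exp (φ t z) * ν t z) y) x
      = dvg (fun y => (Real.exp (φ t y) * ν t y) • ((D t) *ᵥ grad (φ t) y)) x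
        + dvg (fun y => Real.exp (φ t y) • ((D t) *ᵥ grad (ν t) y)) x := by
    have hfun : (fun y => (D t) *ᵥ grad (fun z => Real.exp (φ t z) * ν t z) y)
        = fun y => (Real.exp (φ t y) * ν t y) • ((D t) *ᵥ grad (φ t) y)
            + Real.exp (φ t y) • ((D t) *ᵥ grad (ν t) y) := by
      funext y
      rw [hgradμ y, Matrix.mulVec_add, Matrix.mulVec_smul, Matrix.mulVec_smul]
    rw [hfun]
    refine dvg_add (fun i => ?_) (fun i => ?_) <;>
      simp only [Pi.smul_apply, smul_eq_mul]
    · exact ((hμt.differentiable (by simp)).mul ((hMφ i).differentiable (by simp))) x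
    · exact ((hEt.differentiable (by simp)).mul ((hMν i).differentiable (by simp))) x
  -- product rules for the divergences
  have hC2 : dvg (fun y => (Real.exp (φ t y) * ν t y) • ((D t) *ᵥ grad (φ t) y)) x
      = grad (fun z => Real.exp (φ t z) * ν t z) x ⬝ᵥ ((D t) *ᵥ grad (φ t) x)
        + (Real.exp (φ t x) * ν t x) * dvg (fun y => (D t) *ᵥ grad (φ t) y) x :=
    dvg_smul (hμt.differentiable (by simp) x) (fun i => (hMφ i).differentiable (by simp) x)
  have hC4 : dvg (fun y => Real.exp (φ t y) • ((D t) *ᵥ grad (ν t) y)) x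
      = grad (fun z => Real.exp (φ t z)) x ⬝ᵥ ((D t) *ᵥ grad (ν t) x)
        + Real.exp (φ t x) * dvg (fun y => (D t) *ᵥ grad (ν t) y) x :=
    dvg_smul (hEt.differentiable (by simp) x) (fun i => (hMν i).differentiable (by simp) x)
  have hC1 : dvg (fun y => (Real.exp (φ t y) * ν t y) • b t y) x
      = grad (fun z => Real.exp (φ t z) * ν t z) x ⬝ᵥ b t x
        + (Real.exp (φ t x) * ν t x) * dvg (b t) x :=
    dvg_smul (hμt.differentiable (by simp) x) (fun i => (hbti i).differentiable (by simp) x)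
  have hA1 : dvg (fun y => ν t y • b t y) x
      = grad (ν t) x ⬝ᵥ b t x + ν t x * dvg (b t) x :=
    dvg_smul (hνt.differentiable (by simp) x) (fun i => (hbti i).differentiable (by simp) x)
  -- time derivative of the product
  have hμ' : deriv (fun s => Real.exp (φ s x) * ν s x) t
      = Real.exp (φ t x) * deriv (fun s => φ s x) t * ν t x
        + Real.exp (φ t x) * deriv (fun s => ν s x) t := by
    have hφx : HasDerivAt (fun s => φ s x) (deriv (fun s => φ s x) t) t :=
      ((tslice_smooth hφ_smooth x).differentiable (by simp) t).hasDerivAt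
    have hνx : HasDerivAt (fun s => ν s x) (deriv (fun s => ν s x) t) t :=
      ((tslice_smooth hν_smooth x).differentiable (by simp) t).hasDerivAt
    rw [(hφx.exp.fun_mul hνx).deriv]
  -- symmetry of D
  have hsym : grad (ν t) x ⬝ᵥ ((D t) *ᵥ grad (φ t) x)
      = grad (φ t) x ⬝ᵥ ((D t) *ᵥ grad (ν t) x) := symm_dot (hD_symm t) _ _
  have hEgrad : grad (fun z => Real.exp (φ t z)) x = Real.exp (φ t x) • grad (φ t) x :=
    grad_exp (hφt.differentiable (by simp) x)
  -- assemble
  have H1 := hCFP t ht x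
  have H2 := hFP t ht x
  rw [hμ', hC3, hC2, hC4, hC1, hgradμ x, hEgrad] at H1
  simp only [add_dotProduct, smul_dotProduct, smul_eq_mul] at H1
  rw [hA1] at H2
  have hEN : Real.exp (φ t x) * ν t x ≠ 0 :=
    (mul_pos (Real.exp_pos _) (hν_pos t x)).ne'
  have key : (Real.exp (φ t x) * ν t x) * deriv (fun s => φ s x) t
      = (Real.exp (φ t x) * ν t x) *
        (- (b t x ⬝ᵥ grad (φ t) x)
          - (1/2) * (grad (φ t) x ⬝ᵥ (D t).mulVec (grad (φ t) x))
          - (1/2) * dvg (fun y => (D t).mulVec (grad (φ t) y)) x) := by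
    have hcomm : b t x ⬝ᵥ grad (φ t) x = grad (φ t) x ⬝ᵥ b t x := dotProduct_comm _ _
    rw [hcomm]
    linear_combination H1 - Real.exp (φ t x) * H2 - (Real.exp (φ t x) / 2) * hsym
  exact mul_left_cancel₀ hEN key
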